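/- arXiv:1201.3174 — 2 statements merged into one kernel-verified Lean document; each statement's English description precedes it below -/
import Mathlib

section
/- The map φ: a ↦ a·ā from the generators of the graph group G(Σ,I) to the right-angled Coxeter group C(Γ, I_Γ), where Γ = Σ ∪ Σ̄ is a doubled alphabet, induces an injective group homomorphism G(Σ,I) → C(Γ, I_Γ). -/
/-- The defining relators of the graph group (right-angled Artin group) `G(Σ, I)`. -/
def ggRels {S : Type*} (I : S → S → Prop) : Set (FreeGroup S) :=
  {r | ∃ a b : S, I a b ∧
        r = FreeGroup.of a * FreeGroup.of b * (FreeGroup.of a)⁻¹ * (FreeGroup.of b)⁻¹}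

/-- The defining relators of the right-angled Coxeter group `C(Γ, J)`. -/
def racRels {T : Type*} (J : T → T → Prop) : Set (FreeGroup T) :=
  {r | ∃ a : T, r = FreeGroup.of a * FreeGroup.of a} ∪
  {r | ∃ a b : T, J a b ∧
        r = FreeGroup.of a * FreeGroup.of b * (FreeGroup.of a)⁻¹ * (FreeGroup.of b)⁻¹}

/-- The independence relation `I_Γ` on the doubled alphabet `Γ = Σ ∪ Σ̄` (realized as
`Σ ⊕ Σ`, with `inl a = a` and `inr a = ā`): two letters of `Γ` are independent iff the
underlying letters of `Σ` are `I`-independent. -/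
def doubleI {S : Type*} (I : S → S → Prop) : (S ⊕ S) → (S ⊕ S) → Prop :=
  fun x y => I (Sum.elim id id x) (Sum.elim id id y)

/-!
The Coxeter group `C(Γ, I_Γ)` acts on `G × 𝒫(Σ)`, where `G = G(Σ, I)`: the letter `ā` toggles
the membership of `a`, and the letter `a` toggles it too and multiplies the first coordinate on
the left by `a` or `a⁻¹` according as `a` was a member or not. Both are involutions, and letters
that are independent in `I_Γ` act by commuting permutations (for `a` and `b̄` this uses `a ≠ b`,
i.e. irreflexivity of `I`). Then `φ(a) = aā` sends `(g, ∅)` to `(a g, ∅)`, hence `φ(w)` sends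
`(1, ∅)` to `(w, ∅)`, and `φ(w) = 1` forces `w = 1`.
-/

open scoped symmDiff

lemma FreeGroup.lift_commutator_eq_one {T H : Type*} [Group H] {f : T → H} {a b : T}
    (h : Commute (f a) (f b)) :
    FreeGroup.lift f (FreeGroup.of a * FreeGroup.of b * (FreeGroup.of a)⁻¹ * (FreeGroup.of b)⁻¹)
      = 1 := by
  rw [← commutatorElement_def, map_commutatorElement, FreeGroup.lift_apply_of,
    FreeGroup.lift_apply_of, commutatorElement_eq_one_iff_commute]
  exact h

lemma PresentedGroup.commute_of_commutator_mem {T : Type*} {rels : Set (FreeGroup T)} {a b : T}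
    (h : FreeGroup.of a * FreeGroup.of b * (FreeGroup.of a)⁻¹ * (FreeGroup.of b)⁻¹ ∈ rels) :
    Commute (PresentedGroup.of a : PresentedGroup rels) (PresentedGroup.of b) := by
  have h1 := PresentedGroup.one_of_mem h
  rwa [← commutatorElement_def, map_commutatorElement,
    commutatorElement_eq_one_iff_commute] at h1

section UniversalProperties

variable {H : Type*} [Group H]

def graphGroupLift {S : Type*} (I : S → S → Prop) (f : S → H)
    (hf : ∀ a b, I a b → Commute (f a) (f b)) : PresentedGroup (ggRels I) →* H :=
  PresentedGroup.toGroup (f := f) <| by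
    rintro _ ⟨a, b, hab, rfl⟩
    exact FreeGroup.lift_commutator_eq_one (hf a b hab)

def racGroupLift {T : Type*} (J : T → T → Prop) (f : T → H) (hsq : ∀ t, f t * f t = 1)
    (hf : ∀ s t, J s t → Commute (f s) (f t)) : PresentedGroup (racRels J) →* H :=
  PresentedGroup.toGroup (f := f) <| by
    rintro _ (⟨t, rfl⟩ | ⟨s, t, hst, rfl⟩)
    · simpa using hsq t
    · exact FreeGroup.lift_commutator_eq_one (hf s t hst)

@[simp]
lemma graphGroupLift_of {S : Type*} (I : S → S → Prop) (f : S → H)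
    (hf : ∀ a b, I a b → Commute (f a) (f b)) (a : S) :
    graphGroupLift I f hf (PresentedGroup.of a) = f a :=
  PresentedGroup.toGroup.of _

@[simp]
lemma racGroupLift_of {T : Type*} (J : T → T → Prop) (f : T → H) (hsq : ∀ t, f t * f t = 1)
    (hf : ∀ s t, J s t → Commute (f s) (f t)) (t : T) :
    racGroupLift J f hsq hf (PresentedGroup.of t) = f t :=
  PresentedGroup.toGroup.of _

lemma graphGroup_commute_of {S : Type*} (I : S → S → Prop) {a b : S} (hab : I a b) :
    Commute (PresentedGroup.of a : PresentedGroup (ggRels I)) (PresentedGroup.of b) :=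
  PresentedGroup.commute_of_commutator_mem ⟨a, b, hab, rfl⟩

lemma graphGroupLift_of_eq_id {S : Type*} (I : S → S → Prop) :
    graphGroupLift I PresentedGroup.of (fun _ _ => graphGroup_commute_of I) = MonoidHom.id _ :=
  PresentedGroup.ext fun a => graphGroupLift_of I _ _ a

end UniversalProperties

section DoublingMap

variable {S : Type*} (I : S → S → Prop)

lemma commute_of_inl_mul_of_inr {a b : S} (hab : I a b) :
    Commute
      (PresentedGroup.of (Sum.inl a) * PresentedGroup.of (Sum.inr a) :
        PresentedGroup (racRels (doubleI I)))
      (PresentedGroup.of (Sum.inl b) * PresentedGroup.of (Sum.inr b)) := by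
  have hc : ∀ x y : S ⊕ S, Sum.elim id id x = a → Sum.elim id id y = b →
      Commute (PresentedGroup.of x : PresentedGroup (racRels (doubleI I)))
        (PresentedGroup.of y) := by
    rintro x y rfl rfl
    exact PresentedGroup.commute_of_commutator_mem (Set.mem_union_right _ ⟨x, y, hab, rfl⟩)
  exact ((hc _ _ rfl rfl).mul_right (hc _ _ rfl rfl)).mul_left
    ((hc _ _ rfl rfl).mul_right (hc _ _ rfl rfl))

def doublingHom : PresentedGroup (ggRels I) →* PresentedGroup (racRels (doubleI I)) :=
  graphGroupLift I _ fun _ _ => commute_of_inl_mul_of_inr I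

end DoublingMap

section Action

variable {S : Type*}

def toggle {α : Type*} (a : S) (p : α × Set S) : α × Set S :=
  (p.1, p.2 ∆ {a})

lemma toggle_involutive {α : Type*} (a : S) : Function.Involutive (toggle (α := α) a) := by
  rintro ⟨g, s⟩
  simp [toggle]

lemma toggle_comm {α : Type*} (a b : S) (p : α × Set S) :
    toggle a (toggle b p) = toggle b (toggle a p) := by
  simp only [toggle, symmDiff_right_comm]

variable {G : Type*} [Group G] (x : S → G)

open Classical in
noncomputable def signedGen (s : Set S) (a : S) : G :=
  if a ∈ s then x a else (x a)⁻¹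

lemma signedGen_symmDiff_self_mul (s : Set S) (a : S) :
    signedGen x (s ∆ {a}) a * signedGen x s a = 1 := by
  by_cases ha : a ∈ s <;> simp [signedGen, Set.mem_symmDiff, ha]

lemma signedGen_symmDiff_of_ne (s : Set S) {a b : S} (hab : a ≠ b) :
    signedGen x (s ∆ {b}) a = signedGen x s a := by
  classical
  simp [signedGen, Set.mem_symmDiff, hab]

lemma commute_signedGen {a b : S} (h : Commute (x a) (x b)) (s t : Set S) :
    Commute (signedGen x s a) (signedGen x t b) := by
  unfold signedGen
  split_ifs
  exacts [h, h.inv_right, h.inv_left, h.inv_inv]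

noncomputable def mulToggle (a : S) (p : G × Set S) : G × Set S :=
  (signedGen x p.2 a * p.1, p.2 ∆ {a})

lemma mulToggle_involutive (a : S) : Function.Involutive (mulToggle x a) := by
  rintro ⟨g, s⟩
  simp [mulToggle, ← mul_assoc, signedGen_symmDiff_self_mul]

lemma mulToggle_comm {a b : S} (hab : a ≠ b) (h : Commute (x a) (x b)) (p : G × Set S) :
    mulToggle x a (mulToggle x b p) = mulToggle x b (mulToggle x a p) := by
  simp only [mulToggle, signedGen_symmDiff_of_ne x _ hab, signedGen_symmDiff_of_ne x _ hab.symm,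
    ← mul_assoc, symmDiff_right_comm]
  rw [(commute_signedGen x h p.2 p.2).eq]

lemma mulToggle_toggle_comm {a b : S} (hab : a ≠ b) (p : G × Set S) :
    mulToggle x a (toggle b p) = toggle b (mulToggle x a p) := by
  simp only [mulToggle, toggle, signedGen_symmDiff_of_ne x _ hab, symmDiff_right_comm]

noncomputable def letterPerm : S ⊕ S → Equiv.Perm (G × Set S) :=
  Sum.elim (fun a => (mulToggle_involutive x a).toPerm) (fun a => (toggle_involutive a).toPerm)

lemma letterPerm_mul_self (t : S ⊕ S) : letterPerm x t * letterPerm x t = 1 := by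
  ext1 p
  cases t
  exacts [mulToggle_involutive x _ p, toggle_involutive _ p]

variable {I : S → S → Prop}

lemma commute_letterPerm (hirr : ∀ a, ¬ I a a) (hx : ∀ a b, I a b → Commute (x a) (x b))
    {t u : S ⊕ S} (htu : doubleI I t u) : Commute (letterPerm x t) (letterPerm x u) := by
  have hne : Sum.elim id id t ≠ Sum.elim id id u := fun h =>
    hirr _ (h ▸ (show I (Sum.elim id id t) (Sum.elim id id u) from htu))
  ext1 p
  rcases t with a | a <;> rcases u with b | b
  · exact mulToggle_comm x hne (hx a b htu) p
  · exact mulToggle_toggle_comm x hne p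
  · exact (mulToggle_toggle_comm x (Ne.symm hne) p).symm
  · exact toggle_comm a b p

noncomputable def racAction (hirr : ∀ a, ¬ I a a) (hx : ∀ a b, I a b → Commute (x a) (x b)) :
    PresentedGroup (racRels (doubleI I)) →* Equiv.Perm (G × Set S) :=
  racGroupLift _ (letterPerm x) (letterPerm_mul_self x) fun _ _ => commute_letterPerm x hirr hx

end Action

section Embedding

variable {S G : Type*} [Group G] {I : S → S → Prop} (x : S → G)
  (hirr : ∀ a, ¬ I a a) (hx : ∀ a b, I a b → Commute (x a) (x b))

lemma racAction_doublingHom_of (a : S) (g : G) :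
    racAction x hirr hx (doublingHom I (PresentedGroup.of a)) (g, ∅) = (x a * g, ∅) := by
  simp [doublingHom, racAction, letterPerm, mulToggle, toggle, signedGen, Set.mem_symmDiff]

theorem racAction_doublingHom_apply (w : PresentedGroup (ggRels I)) (g : G) :
    racAction x hirr hx (doublingHom I w) (g, ∅) = (graphGroupLift I x hx w * g, ∅) := by
  let Θ := (racAction x hirr hx).comp (doublingHom I)
  let L := graphGroupLift I x hx
  let intertwining : Subgroup (PresentedGroup (ggRels I)) :=
    { carrier := {w | ∀ g, Θ w (g, ∅) = (L w * g, ∅)}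
      one_mem' := fun g => by simp
      mul_mem' := fun {u v} hu hv g => by
        rw [map_mul, Equiv.Perm.mul_apply, hv, hu, map_mul, mul_assoc]
      inv_mem' := fun {w} hw g => by
        rw [map_inv, Equiv.Perm.inv_eq_iff_eq, hw, map_inv, mul_inv_cancel_left] }
  exact PresentedGroup.generated_by _ intertwining
    (fun a g => by simpa [Θ, L] using racAction_doublingHom_of x hirr hx a g) w g

end Embedding

theorem graphGroup_embeds_in_racGroup_general {S : Type*}
    (I : S → S → Prop) (hirr : ∀ a, ¬ I a a) :
    ∃ φ : PresentedGroup (ggRels I) →* PresentedGroup (racRels (doubleI I)),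
      Function.Injective φ ∧
      ∀ a : S, φ (PresentedGroup.of a) =
        PresentedGroup.of (Sum.inl a) * PresentedGroup.of (Sum.inr a) := by
  refine ⟨doublingHom I, (injective_iff_map_eq_one _).2 fun w hw => ?_,
    fun a => graphGroupLift_of ..⟩
  have h := racAction_doublingHom_apply PresentedGroup.of hirr
    (fun _ _ => graphGroup_commute_of I) w 1
  rw [hw, graphGroupLift_of_eq_id, map_one] at h
  simpa using (congrArg Prod.fst h).symm

/-- The map `φ : a ↦ a·ā` induces an injective group homomorphism from the graph group
`G(Σ, I)` into the right-angled Coxeter group `C(Γ, I_Γ)` on the doubled alphabet. -/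
theorem graphGroup_embeds_in_racGroup {S : Type*}
    (I : S → S → Prop) (hirr : ∀ a, ¬ I a a) (hsym : ∀ a b, I a b → I b a) :
    ∃ φ : PresentedGroup (ggRels I) →* PresentedGroup (racRels (doubleI I)),
      Function.Injective φ ∧
      ∀ a : S, φ (PresentedGroup.of a) =
        PresentedGroup.of (Sum.inl a) * PresentedGroup.of (Sum.inr a) :=
  graphGroup_embeds_in_racGroup_general I hirr
end

section
/- The trace rewriting system S_G = {aā → 1, āa → 1 | a ∈ Σ} on the trace monoid M(Γ, I_Γ), where Γ = Σ ∪ Σ̄, is strongly confluent and length-reducing, and its set of irreducible traces gives unique geodesic normal forms for the graph group G(Σ,I) = M(Γ,I_Γ)/S_G. -/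
/-- One commutation step: exchanging two adjacent independent letters. -/
def swapStep {T : Type*} (J : T → T → Prop) (u v : List T) : Prop :=
  ∃ (p s : List T) (a b : T), J a b ∧ u = p ++ a :: b :: s ∧ v = p ++ b :: a :: s

/-- The setoid of trace equivalence. -/
def traceSetoid {T : Type*} (J : T → T → Prop) : Setoid (List T) :=
  Relation.EqvGen.setoid (swapStep J)

/-- The trace monoid `M(Γ, J)`. -/
def Trace {T : Type*} (J : T → T → Prop) : Type _ := Quotient (traceSetoid J)

/-- The trace represented by a word. -/
def mkT {T : Type*} (J : T → T → Prop) (w : List T) : Trace J :=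
  Quotient.mk (traceSetoid J) w

/-- The length of a trace. -/
def lenT {T : Type*} (J : T → T → Prop) : Trace J → ℕ :=
  Quotient.lift List.length (by
    intro u v h
    induction h with
    | rel x y hxy =>
        obtain ⟨p, s, a, b, -, hx, hy⟩ := hxy
        subst hx; subst hy; simp
    | refl x => rfl
    | symm x y _ ih => omega
    | trans x y z _ _ ih1 ih2 => omega)

/-- One step of the trace rewriting system `S_G = {a·ā → 1, ā·a → 1 | a ∈ Σ}` on the
trace monoid `M(Γ, I_Γ)`. -/
def RwG {S : Type*} (I : S → S → Prop) (x y : Trace (doubleI I)) : Prop :=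
  ∃ (a : S) (u v : List (S ⊕ S)),
    (x = mkT (doubleI I) (u ++ Sum.inl a :: Sum.inr a :: v) ∨
     x = mkT (doubleI I) (u ++ Sum.inr a :: Sum.inl a :: v)) ∧
    y = mkT (doubleI I) (u ++ v)

/-- A trace is `S_G`-irreducible iff no rule applies. -/
def IrrG {S : Type*} (I : S → S → Prop) (x : Trace (doubleI I)) : Prop :=
  ∀ y, ¬ RwG I x y

/-- Evaluation of a word over `Γ = Σ ∪ Σ̄` in the graph group `G(Σ, I)`, sending
`a = inl a` to the generator and `ā = inr a` to its inverse. -/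
def ggEval {S : Type*} (I : S → S → Prop) (w : List (S ⊕ S)) : PresentedGroup (ggRels I) :=
  (w.map (Sum.elim (fun a => PresentedGroup.of (rels := ggRels I) a)
    (fun a => (PresentedGroup.of (rels := ggRels I) a)⁻¹))).prod

/-!
Every `S_G`-redex `x x̄` of a trace appears in each representative word as a factor `x g x̄`
whose middle `g` commutes with `x`, and such a factor survives every exchange of adjacent
independent letters. So of two redexes of one trace, the first can be made adjacent in a word
that still exhibits the second, and comparing the positions of the two factors gives strong
confluence. As `S_G` is length-reducing, every trace has a unique irreducible descendant.

For the graph group: `S_G`-equivalence is a congruence on words, in whose quotient monoid `x̄`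
inverts `x` and independent letters commute. The presentation of `G(Σ, I)` therefore maps into
its units, so words with the same value in `G(Σ, I)` are `S_G`-equivalent; they have the same
normal form, which is no longer than either of them.
-/

open Relation

theorem Relation.EqvGen.map {α β : Type*} {r : α → α → Prop} {r' : β → β → Prop} (f : α → β)
    (hf : ∀ a b, r a b → r' (f a) (f b)) {a b : α} (h : EqvGen r a b) :
    EqvGen r' (f a) (f b) :=
  Setoid.eqvGen_le (s := (EqvGen.setoid r').comap f) (fun x y h => EqvGen.rel _ _ (hf x y h)) h

theorem Relation.EqvGen.apply_eq_apply {α β : Type*} {r : α → α → Prop} {f : α → β}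
    (hf : ∀ a b, r a b → f a = f b) {a b : α} (h : EqvGen r a b) : f a = f b :=
  Setoid.eqvGen_le (s := Setoid.ker f) hf h

theorem List.append_cons_eq_append_cons_iff {T : Type*} {p q s t : List T} {a b : T} :
    p ++ a :: s = q ++ b :: t ↔
      (p = q ∧ a = b ∧ s = t) ∨ (∃ m, q = p ++ a :: m ∧ s = m ++ b :: t) ∨
        (∃ m, p = q ++ b :: m ∧ t = m ++ a :: s) := by
  constructor
  · intro h
    rcases List.append_eq_append_iff.1 h with ⟨m, rfl, hm⟩ | ⟨m, rfl, hm⟩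
    · rcases m with _ | ⟨c, m⟩
      · simp_all
      · simp only [List.cons_append, List.cons.injEq] at hm
        exact Or.inr (Or.inl ⟨m, by rw [hm.1], hm.2⟩)
    · rcases m with _ | ⟨c, m⟩
      · simp_all
      · simp only [List.cons_append, List.cons.injEq] at hm
        exact Or.inr (Or.inr ⟨m, by rw [hm.1], hm.2⟩)
  · rintro (⟨rfl, rfl, rfl⟩ | ⟨m, rfl, rfl⟩ | ⟨m, rfl, rfl⟩) <;> simp

section TraceMonoid

variable {T : Type*} {J : T → T → Prop}

theorem mkT_eq_mkT_iff {u v : List T} : mkT J u = mkT J v ↔ EqvGen (swapStep J) u v :=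
  Quotient.eq

theorem lenT_mkT (w : List T) : lenT J (mkT J w) = w.length := rfl

theorem mkT_swap {a b : T} (hab : J a b) (p s : List T) :
    mkT J (p ++ a :: b :: s) = mkT J (p ++ b :: a :: s) :=
  Quotient.sound (EqvGen.rel _ _ ⟨p, s, a, b, hab, rfl, rfl⟩)

theorem mkT_cons_append_eq_append_cons {x : T} {g : List T} (hg : ∀ z ∈ g, J x z)
    (p s : List T) : mkT J (p ++ x :: (g ++ s)) = mkT J (p ++ (g ++ x :: s)) := by
  induction g generalizing p with
  | nil => rfl
  | cons z g ih =>
    rw [List.forall_mem_cons] at hg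
    calc mkT J (p ++ x :: z :: (g ++ s)) = mkT J ((p ++ [z]) ++ x :: (g ++ s)) := by
          simpa using mkT_swap hg.1 p (g ++ s)
      _ = mkT J (p ++ (z :: g ++ x :: s)) := by simpa using ih hg.2 (p ++ [z])

def appendT (p s : List T) : Trace J → Trace J :=
  Quotient.map (fun w => p ++ w ++ s) fun _ _ h =>
    EqvGen.map (r' := swapStep J) (fun w => p ++ w ++ s) (fun _ _ ⟨q, t, a, b, hab, hu, hv⟩ =>
      ⟨p ++ q, t ++ s, a, b, hab, by simp [hu], by simp [hv]⟩) h

theorem appendT_mkT (p s w : List T) : appendT p s (mkT J w) = mkT J (p ++ w ++ s) := rfl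

end TraceMonoid

section GraphGroup

variable {S : Type*} {I : S → S → Prop}

theorem doubleI_swap_left (x z : S ⊕ S) : doubleI I x.swap z = doubleI I x z := by
  cases x <;> rfl

theorem doubleI_symm (hsym : ∀ a b, I a b → I b a) {x z : S ⊕ S} (h : doubleI I x z) :
    doubleI I z x :=
  hsym _ _ h

theorem not_doubleI_self (hirr : ∀ a, ¬ I a a) (x : S ⊕ S) : ¬ doubleI I x x := by
  cases x <;> exact hirr _

theorem not_doubleI_swap (hirr : ∀ a, ¬ I a a) (x : S ⊕ S) : ¬ doubleI I x x.swap := by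
  cases x <;> exact hirr _

theorem rwG_iff {x y : Trace (doubleI I)} :
    RwG I x y ↔ ∃ (u v : List (S ⊕ S)) (c : S ⊕ S),
      x = mkT (doubleI I) (u ++ c :: c.swap :: v) ∧ y = mkT (doubleI I) (u ++ v) := by
  constructor
  · rintro ⟨a, u, v, hx | hx, rfl⟩
    exacts [⟨u, v, .inl a, hx, rfl⟩, ⟨u, v, .inr a, hx, rfl⟩]
  · rintro ⟨u, v, c | c, hx, rfl⟩
    exacts [⟨c, u, v, .inl hx, rfl⟩, ⟨c, u, v, .inr hx, rfl⟩]

theorem lenT_lt_of_rwG {x y : Trace (doubleI I)} (h : RwG I x y) :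
    lenT (doubleI I) y < lenT (doubleI I) x := by
  obtain ⟨u, v, c, rfl, rfl⟩ := rwG_iff.1 h
  simp [lenT_mkT]

theorem rwG_appendT (p s : List (S ⊕ S)) {x y : Trace (doubleI I)} (h : RwG I x y) :
    RwG I (appendT p s x) (appendT p s y) := by
  obtain ⟨u, v, c, rfl, rfl⟩ := rwG_iff.1 h
  exact rwG_iff.2 ⟨p ++ u, v ++ s, c, by simp [appendT_mkT], by simp [appendT_mkT]⟩

variable (I) in
def CancelStep (w r : List (S ⊕ S)) : Prop :=
  ∃ (u g v : List (S ⊕ S)) (x : S ⊕ S), (∀ z ∈ g, doubleI I x z) ∧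
    w = u ++ x :: (g ++ x.swap :: v) ∧ r = u ++ (g ++ v)

theorem CancelStep.adjacent (u v : List (S ⊕ S)) (x : S ⊕ S) :
    CancelStep I (u ++ x :: x.swap :: v) (u ++ v) :=
  ⟨u, [], v, x, by simp, rfl, rfl⟩

theorem rwG_mkT_of_cancelStep {w r : List (S ⊕ S)} (h : CancelStep I w r) :
    RwG I (mkT (doubleI I) w) (mkT (doubleI I) r) := by
  obtain ⟨u, g, v, x, hg, rfl, rfl⟩ := h
  have hg' : ∀ z ∈ g, doubleI I x.swap z := fun z hz => (doubleI_swap_left x z).symm ▸ hg z hz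
  refine rwG_iff.2 ⟨u, g ++ v, x, ?_, rfl⟩
  simpa using (mkT_cons_append_eq_append_cons hg' (u ++ [x]) v).symm

theorem exists_cancelStep_of_swapStep (hirr : ∀ a, ¬ I a a) (hsym : ∀ a b, I a b → I b a)
    {w w' r : List (S ⊕ S)} (hw : swapStep (doubleI I) w w') (hr : CancelStep I w r) :
    ∃ r', CancelStep I w' r' ∧ mkT (doubleI I) r' = mkT (doubleI I) r := by
  obtain ⟨p, s, c, d, hcd, hw, rfl⟩ := hw
  obtain ⟨u, g, v, x, hg, rfl, rfl⟩ := hr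
  rcases List.append_cons_eq_append_cons_iff.1 hw with
    ⟨rfl, rfl, hs⟩ | ⟨m, rfl, hm⟩ | ⟨m, rfl, hm⟩
  · -- the swap moves `x` to the right, past the first letter of `g`
    rcases g with _ | ⟨z, g⟩
    · obtain ⟨rfl, -⟩ := List.cons.inj hs
      exact absurd hcd (not_doubleI_swap hirr x)
    · obtain ⟨rfl, rfl⟩ := List.cons.inj hs
      rw [List.forall_mem_cons] at hg
      exact ⟨_, ⟨u ++ [z], g, v, x, hg.2, by simp, rfl⟩, by simp⟩
  · rcases List.append_cons_eq_append_cons_iff.1 hm with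
      ⟨rfl, rfl, rfl⟩ | ⟨n, rfl, rfl⟩ | ⟨n, rfl, hn⟩
    · -- the swap moves `x̄` to the right
      rw [doubleI_swap_left] at hcd
      refine ⟨_, ⟨u, g ++ [d], s, x, ?_, by simp, rfl⟩, by simp⟩
      exact List.forall_mem_append.2 ⟨hg, List.forall_mem_singleton.2 hcd⟩
    · -- the swap happens in `v`
      exact ⟨_, ⟨u, g, n ++ d :: c :: s, x, hg, by simp, rfl⟩,
        by simpa using (mkT_swap hcd (u ++ g ++ n) s).symm⟩
    · rcases n with _ | ⟨n, n'⟩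
      · -- the swap moves `x̄` to the left, past the last letter of `g`
        obtain ⟨rfl, rfl⟩ := List.cons.inj hn
        exact ⟨_, ⟨u, m, c :: s, x, fun z hz => hg z (by simp [hz]), by simp, rfl⟩, by simp⟩
      · -- the swap happens in `g`
        obtain ⟨rfl, rfl⟩ := List.cons.inj hn
        refine ⟨_, ⟨u, m ++ d :: c :: n', v, x, ?_, by simp, rfl⟩,
          by simpa using (mkT_swap hcd (u ++ m) (n' ++ v)).symm⟩
        simp only [List.forall_mem_append, List.forall_mem_cons] at hg ⊢
        tauto
  · rcases m with _ | ⟨m, m'⟩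
    · -- the swap moves `x` to the left
      obtain ⟨rfl, rfl⟩ := List.cons.inj hm
      refine ⟨_, ⟨p, c :: g, v, d, ?_, by simp, rfl⟩, by simp⟩
      exact List.forall_mem_cons.2 ⟨doubleI_symm hsym hcd, hg⟩
    · -- the swap happens in `u`
      obtain ⟨rfl, rfl⟩ := List.cons.inj hm
      exact ⟨_, ⟨p ++ d :: c :: m', g, v, x, hg, by simp, rfl⟩,
        by simpa using (mkT_swap hcd p (m' ++ (g ++ v))).symm⟩

theorem exists_cancelStep_congr (hirr : ∀ a, ¬ I a a) (hsym : ∀ a b, I a b → I b a)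
    {w w' : List (S ⊕ S)} (h : mkT (doubleI I) w = mkT (doubleI I) w')
    (t : Trace (doubleI I)) :
    (∃ r, CancelStep I w r ∧ mkT (doubleI I) r = t) ↔
      (∃ r, CancelStep I w' r ∧ mkT (doubleI I) r = t) := by
  have transport {w w'} (hw : swapStep (doubleI I) w w') :
      (∃ r, CancelStep I w r ∧ mkT (doubleI I) r = t) →
        ∃ r, CancelStep I w' r ∧ mkT (doubleI I) r = t := by
    rintro ⟨r, hr, rfl⟩
    exact exists_cancelStep_of_swapStep hirr hsym hw hr
  replace h := mkT_eq_mkT_iff.1 h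
  induction h with
  | rel w w' hw =>
    obtain ⟨p, s, a, b, hab, rfl, rfl⟩ := hw
    exact ⟨transport ⟨p, s, a, b, hab, rfl, rfl⟩,
      transport ⟨p, s, b, a, doubleI_symm hsym hab, rfl, rfl⟩⟩
  | refl => rfl
  | symm _ _ _ ih => exact ih.symm
  | trans _ _ _ _ _ ih₁ ih₂ => exact ih₁.trans ih₂

theorem exists_cancelStep_of_rwG (hirr : ∀ a, ¬ I a a) (hsym : ∀ a b, I a b → I b a)
    {w : List (S ⊕ S)} {t : Trace (doubleI I)} (h : RwG I (mkT (doubleI I) w) t) :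
    ∃ r, CancelStep I w r ∧ mkT (doubleI I) r = t := by
  obtain ⟨u, v, c, hw, rfl⟩ := rwG_iff.1 h
  exact (exists_cancelStep_congr hirr hsym hw _).2 ⟨_, CancelStep.adjacent u v c, rfl⟩

theorem cancelStep_adjacent_joinable (hirr : ∀ a, ¬ I a a) {u v r : List (S ⊕ S)}
    {x : S ⊕ S} (h : CancelStep I (u ++ x :: x.swap :: v) r) :
    mkT (doubleI I) (u ++ v) = mkT (doubleI I) r ∨
      ∃ s, CancelStep I (u ++ v) s ∧ CancelStep I r s := by
  obtain ⟨u₂, g, v₂, y, hg, hw, rfl⟩ := h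
  rcases List.append_cons_eq_append_cons_iff.1 hw with
    ⟨rfl, rfl, hv⟩ | ⟨m, rfl, hm⟩ | ⟨m, rfl, hm⟩
  · -- both redexes start at `x`
    rcases g with _ | ⟨z, g⟩
    · exact .inl (by simp_all)
    · obtain ⟨rfl, -⟩ := List.cons.inj hv
      exact absurd (hg _ List.mem_cons_self) (not_doubleI_swap hirr x)
  · rcases m with _ | ⟨z, m⟩
    · -- the redexes share the letter `x̄ = y`
      obtain ⟨rfl, rfl⟩ := List.cons.inj hm
      rw [Sum.swap_swap]
      simp_rw [doubleI_swap_left] at hg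
      exact .inl (by simpa using (mkT_cons_append_eq_append_cons hg u v₂).symm)
    · obtain ⟨rfl, rfl⟩ := List.cons.inj hm
      exact .inr ⟨_, ⟨u ++ m, g, v₂, y, hg, by simp, rfl⟩, ⟨u, [], m ++ (g ++ v₂), x, by simp,
        by simp, by simp⟩⟩
  · rcases List.append_cons_eq_append_cons_iff.1 hm with
      ⟨rfl, hy, rfl⟩ | ⟨n, rfl, rfl⟩ | ⟨n, rfl, hn⟩
    · -- the redexes share the letter `ȳ = x`
      obtain rfl : x.swap = y := by rw [← hy, Sum.swap_swap]
      exact .inl (by simpa using mkT_cons_append_eq_append_cons hg u₂ v)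
    · exact .inr ⟨_, ⟨u₂, g, n ++ v, y, hg, by simp, rfl⟩, ⟨u₂ ++ g ++ n, [], v, x, by simp,
        by simp, by simp⟩⟩
    · rcases n with _ | ⟨z, n⟩
      · obtain ⟨hy, -⟩ := List.cons.inj hn
        obtain rfl := Sum.swap_leftInverse.injective hy
        exact absurd (hg x (by simp)) (not_doubleI_self hirr x)
      · -- the redex `x x̄` lies inside `g`
        obtain ⟨rfl, rfl⟩ := List.cons.inj hn
        refine .inr ⟨_, ⟨u₂, m ++ n, v₂, y, fun z hz => hg z ?_, by simp, rfl⟩,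
          ⟨u₂ ++ m, [], n ++ v₂, x, by simp, by simp, by simp⟩⟩
        simp only [List.mem_append, List.mem_cons] at hz ⊢
        tauto

theorem rwG_strongly_confluent (hirr : ∀ a, ¬ I a a) (hsym : ∀ a b, I a b → I b a)
    {x y z : Trace (doubleI I)} (hy : RwG I x y) (hz : RwG I x z) :
    ∃ w, (RwG I y w ∨ y = w) ∧ (RwG I z w ∨ z = w) := by
  obtain ⟨u, v, c, rfl, rfl⟩ := rwG_iff.1 hy
  obtain ⟨r, hr, rfl⟩ := exists_cancelStep_of_rwG hirr hsym hz
  rcases cancelStep_adjacent_joinable hirr hr with h | ⟨s, h₁, h₂⟩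
  · exact ⟨_, .inr rfl, .inr h.symm⟩
  · exact ⟨_, .inl (rwG_mkT_of_cancelStep h₁), .inl (rwG_mkT_of_cancelStep h₂)⟩

theorem join_of_eqvGen_rwG (hirr : ∀ a, ¬ I a a) (hsym : ∀ a b, I a b → I b a)
    {x y : Trace (doubleI I)} (h : EqvGen (RwG I) x y) : Join (ReflTransGen (RwG I)) x y := by
  have hconf (a b c : Trace (doubleI I)) (hb : RwG I a b) (hc : RwG I a c) :
      ∃ d, ReflGen (RwG I) b d ∧ ReflTransGen (RwG I) c d := by
    obtain ⟨d, hbd, hcd⟩ := rwG_strongly_confluent hirr hsym hb hc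
    refine ⟨d, ?_, ?_⟩
    · rcases hbd with hbd | rfl
      exacts [.single hbd, .refl]
    · rcases hcd with hcd | rfl
      exacts [.single hcd, .refl]
  have := (equivalence_join_reflTransGen hconf).isEquiv
  exact EqvGen.eqvGen_le (fun a b hab => ⟨b, .single hab, .refl⟩) _ _ h

theorem lenT_le_of_reflTransGen_rwG {x y : Trace (doubleI I)}
    (h : ReflTransGen (RwG I) x y) : lenT (doubleI I) y ≤ lenT (doubleI I) x := by
  induction h with
  | refl => rfl
  | tail _ hyz ih => exact (lenT_lt_of_rwG hyz).le.trans ih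

theorem exists_irrG_reflTransGen (x : Trace (doubleI I)) :
    ∃ n, IrrG I n ∧ ReflTransGen (RwG I) x n := by
  induction hx : lenT (doubleI I) x using Nat.strong_induction_on generalizing x with
  | _ k ih =>
    by_cases hirr : IrrG I x
    · exact ⟨x, hirr, .refl⟩
    · obtain ⟨y, hxy⟩ := not_forall_not.1 hirr
      obtain ⟨n, hn, hyn⟩ := ih _ (hx ▸ lenT_lt_of_rwG hxy) y rfl
      exact ⟨n, hn, .head hxy hyn⟩

theorem IrrG.eq_of_reflTransGen {x y : Trace (doubleI I)} (hx : IrrG I x)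
    (h : ReflTransGen (RwG I) x y) : x = y := by
  rcases h.cases_head with rfl | ⟨z, hxz, -⟩
  · rfl
  · exact absurd hxz (hx z)

theorem IrrG.eq_of_eqvGen (hirr : ∀ a, ¬ I a a) (hsym : ∀ a b, I a b → I b a)
    {x y : Trace (doubleI I)} (hx : IrrG I x) (hy : IrrG I y) (h : EqvGen (RwG I) x y) :
    x = y := by
  obtain ⟨d, hxd, hyd⟩ := join_of_eqvGen_rwG hirr hsym h
  exact (hx.eq_of_reflTransGen hxd).trans (hy.eq_of_reflTransGen hyd).symm

theorem IrrG.lenT_le_of_eqvGen (hirr : ∀ a, ¬ I a a) (hsym : ∀ a b, I a b → I b a)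
    {x y : Trace (doubleI I)} (hx : IrrG I x) (h : EqvGen (RwG I) x y) :
    lenT (doubleI I) x ≤ lenT (doubleI I) y := by
  obtain ⟨d, hxd, hyd⟩ := join_of_eqvGen_rwG hirr hsym h
  exact hx.eq_of_reflTransGen hxd ▸ lenT_le_of_reflTransGen_rwG hyd

theorem ggEval_append (u v : List (S ⊕ S)) : ggEval I (u ++ v) = ggEval I u * ggEval I v := by
  simp [ggEval]

theorem ggEval_append_cons_cons (p s : List (S ⊕ S)) (x y : S ⊕ S) :
    ggEval I (p ++ x :: y :: s) = ggEval I p * (ggEval I [x] * ggEval I [y]) * ggEval I s := by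
  simp [ggEval, mul_assoc]

theorem ggEval_mul_ggEval_swap (x : S ⊕ S) : ggEval I [x] * ggEval I [x.swap] = 1 := by
  cases x <;> simp [ggEval]

theorem commute_of_of {a b : S} (hab : I a b) :
    Commute (PresentedGroup.of (rels := ggRels I) a) (PresentedGroup.of b) := by
  rw [← commutatorElement_eq_one_iff_commute, commutatorElement_def]
  exact PresentedGroup.one_of_mem ⟨a, b, hab, rfl⟩

theorem commute_ggEval_singleton {x z : S ⊕ S} (h : doubleI I x z) :
    Commute (ggEval I [x]) (ggEval I [z]) := by
  cases x <;> cases z <;> simpa [ggEval] using commute_of_of (I := I) h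

theorem ggEval_eq_of_swapStep {u v : List (S ⊕ S)} (h : swapStep (doubleI I) u v) :
    ggEval I u = ggEval I v := by
  obtain ⟨p, s, a, b, hab, rfl, rfl⟩ := h
  rw [ggEval_append_cons_cons, ggEval_append_cons_cons, (commute_ggEval_singleton hab).eq]

theorem ggEval_eq_of_mkT_eq {u v : List (S ⊕ S)}
    (h : mkT (doubleI I) u = mkT (doubleI I) v) : ggEval I u = ggEval I v :=
  (mkT_eq_mkT_iff.1 h).apply_eq_apply fun _ _ => ggEval_eq_of_swapStep

variable (I) in
def traceEval : Trace (doubleI I) → PresentedGroup (ggRels I) :=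
  Quotient.lift (ggEval I) fun _ _ h => ggEval_eq_of_mkT_eq (Quotient.sound h)

theorem traceEval_mkT (w : List (S ⊕ S)) : traceEval I (mkT (doubleI I) w) = ggEval I w := rfl

theorem traceEval_eq_of_rwG {x y : Trace (doubleI I)} (h : RwG I x y) :
    traceEval I x = traceEval I y := by
  obtain ⟨u, v, c, rfl, rfl⟩ := rwG_iff.1 h
  rw [traceEval_mkT, traceEval_mkT, ggEval_append_cons_cons, ggEval_mul_ggEval_swap, mul_one,
    ggEval_append]

theorem eqvGen_rwG_mkT_append {u v u' v' : List (S ⊕ S)}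
    (h : EqvGen (RwG I) (mkT (doubleI I) u) (mkT (doubleI I) v))
    (h' : EqvGen (RwG I) (mkT (doubleI I) u') (mkT (doubleI I) v')) :
    EqvGen (RwG I) (mkT (doubleI I) (u ++ u')) (mkT (doubleI I) (v ++ v')) := by
  have h₁ := h.map (appendT [] u') fun _ _ => rwG_appendT _ _
  have h₂ := h'.map (appendT v []) fun _ _ => rwG_appendT _ _
  simp only [appendT_mkT, List.nil_append, List.append_nil] at h₁ h₂
  exact h₁.trans _ _ _ h₂

variable (I) in
def rwGCon : Con (FreeMonoid (S ⊕ S)) where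
  r u v := EqvGen (RwG I) (mkT (doubleI I) u.toList) (mkT (doubleI I) v.toList)
  iseqv := ⟨fun _ => .refl _, .symm _ _, .trans _ _ _⟩
  mul' := eqvGen_rwG_mkT_append

theorem rwGCon_of_mul_of_swap (x : S ⊕ S) :
    ((FreeMonoid.of x * FreeMonoid.of x.swap : FreeMonoid (S ⊕ S)) : (rwGCon I).Quotient) = 1 :=
  (rwGCon I).eq.2 (EqvGen.rel _ _ (rwG_iff.2 ⟨[], [], x, rfl, rfl⟩))

variable (I) in
def letterUnit (x : S ⊕ S) : (rwGCon I).Quotientˣ where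
  val := (FreeMonoid.of x : FreeMonoid (S ⊕ S))
  inv := (FreeMonoid.of x.swap : FreeMonoid (S ⊕ S))
  val_inv := rwGCon_of_mul_of_swap x
  inv_val := by simpa using rwGCon_of_mul_of_swap (I := I) x.swap

theorem commute_letterUnit {x z : S ⊕ S} (h : doubleI I x z) :
    Commute (letterUnit I x) (letterUnit I z) := by
  refine Units.ext ((rwGCon I).eq.2 ?_)
  change EqvGen (RwG I) (mkT (doubleI I) [x, z]) (mkT (doubleI I) [z, x])
  rw [show mkT (doubleI I) [x, z] = mkT (doubleI I) [z, x] from mkT_swap h [] []]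
  exact .refl _

variable (I) in
def toLetterUnits : PresentedGroup (ggRels I) →* (rwGCon I).Quotientˣ :=
  PresentedGroup.toGroup (f := fun a => letterUnit I (.inl a)) <| by
    rintro _ ⟨a, b, hab, rfl⟩
    rw [← commutatorElement_def, map_commutatorElement, FreeGroup.lift_apply_of,
      FreeGroup.lift_apply_of, commutatorElement_eq_one_iff_commute]
    exact commute_letterUnit hab

theorem toLetterUnits_ggEval_singleton (x : S ⊕ S) :
    toLetterUnits I (ggEval I [x]) = letterUnit I x := by
  rcases x with a | a
  · simp [ggEval, toLetterUnits, PresentedGroup.toGroup.of]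
  · simp [ggEval, toLetterUnits, PresentedGroup.toGroup.of]
    rfl

theorem coe_toLetterUnits_ggEval (w : List (S ⊕ S)) :
    (toLetterUnits I (ggEval I w) : (rwGCon I).Quotient) =
      (FreeMonoid.ofList w : FreeMonoid (S ⊕ S)) := by
  induction w with
  | nil => simp [ggEval]
  | cons x w ih =>
    rw [← List.singleton_append, ggEval_append, map_mul, Units.val_mul, ih,
      toLetterUnits_ggEval_singleton]
    rfl

theorem eqvGen_rwG_of_ggEval_eq {u v : List (S ⊕ S)} (h : ggEval I u = ggEval I v) :
    EqvGen (RwG I) (mkT (doubleI I) u) (mkT (doubleI I) v) := by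
  have := congrArg (fun g => (toLetterUnits I g : (rwGCon I).Quotient)) h
  simp only [coe_toLetterUnits_ggEval] at this
  exact (rwGCon I).eq.1 this

end GraphGroup

theorem ggTraceSystem_confluent_normalForms_general {S : Type*}
    (I : S → S → Prop) (hirr : ∀ a, ¬ I a a) (hsym : ∀ a b, I a b → I b a) :
    (∀ x y : Trace (doubleI I), RwG I x y → lenT (doubleI I) y < lenT (doubleI I) x) ∧
    (∀ x y z : Trace (doubleI I), RwG I x y → RwG I x z → y ≠ z →
      ∃ w : Trace (doubleI I), (RwG I y w ∨ y = w) ∧ (RwG I z w ∨ z = w)) ∧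
    (∀ x : Trace (doubleI I), ∃! n : Trace (doubleI I),
      IrrG I n ∧ Relation.ReflTransGen (RwG I) x n) ∧
    (∀ u v : List (S ⊕ S),
      Relation.ReflTransGen (RwG I) (mkT (doubleI I) u) (mkT (doubleI I) v) →
        ggEval I v = ggEval I u) ∧
    (∀ u v : List (S ⊕ S), IrrG I (mkT (doubleI I) u) → IrrG I (mkT (doubleI I) v) →
      (ggEval I u = ggEval I v ↔ mkT (doubleI I) u = mkT (doubleI I) v)) ∧
    (∀ u v : List (S ⊕ S), IrrG I (mkT (doubleI I) u) → ggEval I u = ggEval I v →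
      u.length ≤ v.length) := by
  refine ⟨fun _ _ => lenT_lt_of_rwG, fun _ _ _ hy hz _ => rwG_strongly_confluent hirr hsym hy hz,
    fun x => ?_, fun u v h => ?_, fun u v hu hv => ?_, fun u v hu h => ?_⟩
  · obtain ⟨n, hn, hxn⟩ := exists_irrG_reflTransGen x
    refine ⟨n, ⟨hn, hxn⟩, fun m ⟨hm, hxm⟩ => hm.eq_of_eqvGen hirr hsym hn ?_⟩
    exact .trans _ _ _ (.symm _ _ (EqvGen.reflTransGen_le_eqvGen _ _ _ hxm))
      (EqvGen.reflTransGen_le_eqvGen _ _ _ hxn)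
  · exact ((EqvGen.reflTransGen_le_eqvGen _ _ _ h).apply_eq_apply
      fun _ _ => traceEval_eq_of_rwG).symm
  · exact ⟨fun h => hu.eq_of_eqvGen hirr hsym hv (eqvGen_rwG_of_ggEval_eq h),
      ggEval_eq_of_mkT_eq⟩
  · simpa [lenT_mkT] using hu.lenT_le_of_eqvGen hirr hsym (eqvGen_rwG_of_ggEval_eq h)

/-- The trace rewriting system `S_G = {aā → 1, āa → 1}` on `M(Γ, I_Γ)` is
length-reducing and strongly confluent, and its irreducible traces give unique geodesic
normal forms for the graph group `G(Σ, I)`. -/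
theorem ggTraceSystem_confluent_normalForms {S : Type*} [DecidableEq S]
    (I : S → S → Prop) (hirr : ∀ a, ¬ I a a) (hsym : ∀ a b, I a b → I b a) :
    (∀ x y : Trace (doubleI I), RwG I x y → lenT (doubleI I) y < lenT (doubleI I) x) ∧
    (∀ x y z : Trace (doubleI I), RwG I x y → RwG I x z → y ≠ z →
      ∃ w : Trace (doubleI I), (RwG I y w ∨ y = w) ∧ (RwG I z w ∨ z = w)) ∧
    (∀ x : Trace (doubleI I), ∃! n : Trace (doubleI I),
      IrrG I n ∧ Relation.ReflTransGen (RwG I) x n) ∧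
    (∀ u v : List (S ⊕ S),
      Relation.ReflTransGen (RwG I) (mkT (doubleI I) u) (mkT (doubleI I) v) →
        ggEval I v = ggEval I u) ∧
    (∀ u v : List (S ⊕ S), IrrG I (mkT (doubleI I) u) → IrrG I (mkT (doubleI I) v) →
      (ggEval I u = ggEval I v ↔ mkT (doubleI I) u = mkT (doubleI I) v)) ∧
    (∀ u v : List (S ⊕ S), IrrG I (mkT (doubleI I) u) → ggEval I u = ggEval I v →
      u.length ≤ v.length) :=
  ggTraceSystem_confluent_normalForms_general I hirr hsym
end
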